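/- Fix real g > 2 and a positive integer n ≤ g, and define CR_{3π/4} on compositions m = (m_1,…,m_r) of n by CR_{3π/4}(m) = (−1)^r 2^r 2^{n/2} Π_{s=1}^{r} [(g−1)cos(3m_s π/4) + cos(m_s π/2)]/(m_1+⋯+m_s). Then CR_{3π/4}(m) > 0 if and only if the number of parts m_s with m_s ≡ 3, 5, or 0 (mod 8) is even. -/
import Mathlib


open Real

lemma coshift (x y : ℝ) (k : ℤ) (h : y = x + k*(2*π)) : Real.cos y = Real.cos x := by
  rw [h]; exact Real.cos_add_int_mul_two_pi _ _

lemma cosmod (m k : ℕ) (j : ℤ) (x : ℝ) (hx : (k:ℝ) * x = (j:ℝ) * (2 * π)) :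
    Real.cos ((m:ℝ) * x) = Real.cos ((m % k : ℕ) * x) := by
  conv_lhs => rw [← Nat.div_add_mod m k]
  generalize m / k = q
  generalize m % k = r
  rw [show ((((k*q + r : ℕ)):ℝ)) * x = (r:ℝ)*x + ((q:ℝ)) * ((k:ℝ)*x) by push_cast; ring, hx,
    show (r:ℝ)*x + (q:ℝ) * ((j:ℝ)*(2*π)) = (r:ℝ)*x + (((q:ℤ)*j : ℤ):ℝ)*(2*π) by push_cast; ring]
  exact Real.cos_add_int_mul_two_pi _ _

lemma fsign (g : ℝ) (hg : 2 < g) (m : ℕ) :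
    if m % 8 = 3 ∨ m % 8 = 5 ∨ m % 8 = 0 then
      0 < (g - 1) * Real.cos ((m:ℝ) * (3 * π / 4)) + Real.cos ((m:ℝ) * (π / 2))
    else
      (g - 1) * Real.cos ((m:ℝ) * (3 * π / 4)) + Real.cos ((m:ℝ) * (π / 2)) < 0 := by
  have s2 : 0 < Real.sqrt 2 := Real.sqrt_pos.mpr (by norm_num)
  rw [show (m:ℝ) * (3 * π / 4) = (m:ℝ) * (3*π/4) by ring,
      cosmod m 8 3 (3*π/4) (by push_cast; ring),
      show (m:ℝ) * (π / 2) = (m:ℝ) * (π/2) by ring,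
      cosmod m 8 2 (π/2) (by push_cast; ring)]
  have h8 : m % 8 < 8 := Nat.mod_lt _ (by norm_num)
  set r := m % 8 with hr
  clear_value r
  interval_cases r
  · norm_num; linarith
  · push_cast
    simp only [one_mul]
    rw [if_neg (by norm_num),
        show 3*π/4 = π - π/4 by ring, Real.cos_pi_sub, Real.cos_pi_div_four,
        Real.cos_pi_div_two]
    nlinarith
  · push_cast
    rw [if_neg (by norm_num),
        coshift (π/2 + π) (2*(3*π/4)) 0 (by ring), Real.cos_add_pi, Real.cos_pi_div_two,
        show (2:ℝ)*(π/2) = π by ring, Real.cos_pi]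
    nlinarith
  · push_cast
    rw [if_pos (by norm_num),
        coshift (π/4) (3*(3*π/4)) 1 (by ring), Real.cos_pi_div_four,
        coshift (π/2 + π) (3*(π/2)) 0 (by ring), Real.cos_add_pi, Real.cos_pi_div_two]
    nlinarith
  · push_cast
    rw [if_neg (by norm_num),
        coshift π (4*(3*π/4)) 1 (by ring), Real.cos_pi,
        coshift 0 (4*(π/2)) 1 (by ring), Real.cos_zero]
    nlinarith
  · push_cast
    rw [if_pos (by norm_num),
        coshift (-(π/4)) (5*(3*π/4)) 2 (by ring), Real.cos_neg, Real.cos_pi_div_four,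
        coshift (π/2) (5*(π/2)) 1 (by ring), Real.cos_pi_div_two]
    nlinarith
  · push_cast
    rw [if_neg (by norm_num),
        coshift (π/2) (6*(3*π/4)) 2 (by ring), Real.cos_pi_div_two,
        coshift π (6*(π/2)) 1 (by ring), Real.cos_pi]
    nlinarith
  · push_cast
    rw [if_neg (by norm_num),
        coshift (π/4 + π) (7*(3*π/4)) 2 (by ring), Real.cos_add_pi, Real.cos_pi_div_four,
        coshift (-(π/2)) (7*(π/2)) 2 (by ring), Real.cos_neg, Real.cos_pi_div_two]
    nlinarith

lemma prod_sign {ι : Type*} (s : Finset ι) (F : ι → ℝ) (h : ∀ a ∈ s, F a ≠ 0) :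
    (0 < ∏ a ∈ s, F a ↔ Even ((s.filter fun a => F a < 0).card)) := by
  classical
  induction s using Finset.induction with
  | empty => simp
  | @insert a s ha ih =>
    have hFa := h a (Finset.mem_insert_self a s)
    have hs : ∀ b ∈ s, F b ≠ 0 := fun b hb => h b (Finset.mem_insert_of_mem hb)
    have hP : ∏ b ∈ s, F b ≠ 0 := Finset.prod_ne_zero_iff.mpr hs
    rw [Finset.prod_insert ha, Finset.filter_insert]
    rcases hFa.lt_or_gt with hneg | hpos
    · rw [if_pos hneg,
        Finset.card_insert_of_notMem (fun hmem => ha (Finset.mem_filter.mp hmem).1),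
        Nat.even_add_one, ← ih hs]
      constructor
      · intro hpos' hPpos; nlinarith
      · intro hnp
        rcases hP.lt_or_gt with h1 | h2
        · exact mul_pos_of_neg_of_neg hneg h1
        · exact absurd h2 hnp
    · rw [if_neg (by linarith : ¬ F a < 0), ← ih hs]
      constructor
      · intro h'
        rcases hP.lt_or_gt with h1 | h2
        · nlinarith
        · exact h2
      · intro h'; exact mul_pos hpos h'

/-- `CR_{3π/4}(m)` for a composition `m = (m_1,…,m_r)` of `n`. -/
noncomputable def CR3 (g : ℝ) {n : ℕ} (c : Composition n) : ℝ :=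
  (-1 : ℝ) ^ c.length * 2 ^ c.length * Real.sqrt 2 ^ n *
    ∏ s : Fin c.length,
      ((g - 1) * Real.cos ((c.blocksFun s : ℝ) * (3 * π / 4))
        + Real.cos ((c.blocksFun s : ℝ) * (π / 2))) / (c.sizeUpTo (s + 1) : ℝ)

/-- `CR_{3π/4}(m) > 0` iff the number of parts congruent to `3`, `5` or `0` mod `8` is even. -/
theorem CR_three_pi_div_four_sign (g : ℝ) (hg : 2 < g) (n : ℕ) (hn : 0 < n)
    (hng : (n : ℝ) ≤ g) (c : Composition n) :
    0 < CR3 g c ↔ Even ((Finset.univ.filter (fun s : Fin c.length =>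
        c.blocksFun s % 8 = 3 ∨ c.blocksFun s % 8 = 5 ∨ c.blocksFun s % 8 = 0)).card) := by
  classical
  set f : Fin c.length → ℝ := fun s =>
    (g - 1) * Real.cos ((c.blocksFun s : ℝ) * (3 * π / 4))
      + Real.cos ((c.blocksFun s : ℝ) * (π / 2)) with hf
  set F : Fin c.length → ℝ := fun s => (-2) * (f s / (c.sizeUpTo (s + 1) : ℝ)) with hF
  have hsz : ∀ s : Fin c.length, 0 < ((c.sizeUpTo (s + 1) : ℕ) : ℝ) := by
    intro s
    have hb := c.one_le_blocksFun s
    have : 0 < c.sizeUpTo (s + 1) := by rw [Composition.sizeUpTo_succ' c s]; omega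
    exact_mod_cast this
  have hP : ∀ s : Fin c.length,
      (c.blocksFun s % 8 = 3 ∨ c.blocksFun s % 8 = 5 ∨ c.blocksFun s % 8 = 0) → F s < 0 := by
    intro s hs
    have h := fsign g hg (c.blocksFun s)
    rw [if_pos hs] at h
    have : 0 < f s / (c.sizeUpTo (s + 1) : ℝ) := div_pos h (hsz s)
    simp only [hF]
    nlinarith
  have hNP : ∀ s : Fin c.length,
      ¬(c.blocksFun s % 8 = 3 ∨ c.blocksFun s % 8 = 5 ∨ c.blocksFun s % 8 = 0) → 0 < F s := by
    intro s hs
    have h := fsign g hg (c.blocksFun s)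
    rw [if_neg hs] at h
    have : f s / (c.sizeUpTo (s + 1) : ℝ) < 0 := div_neg_of_neg_of_pos h (hsz s)
    simp only [hF]
    nlinarith
  have hne : ∀ s ∈ (Finset.univ : Finset (Fin c.length)), F s ≠ 0 := by
    intro s _
    by_cases hs : c.blocksFun s % 8 = 3 ∨ c.blocksFun s % 8 = 5 ∨ c.blocksFun s % 8 = 0
    · exact (hP s hs).ne
    · exact (hNP s hs).ne'
  have hprod : CR3 g c = Real.sqrt 2 ^ n * ∏ s : Fin c.length, F s := by
    have h1 : (∏ s : Fin c.length, F s)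
        = (-2:ℝ)^c.length * ∏ s : Fin c.length, f s / (c.sizeUpTo (s + 1) : ℝ) := by
      simp only [hF]
      rw [Finset.prod_mul_distrib, Finset.prod_const, Finset.card_univ, Fintype.card_fin]
    have h0 : CR3 g c = (-1 : ℝ) ^ c.length * 2 ^ c.length * Real.sqrt 2 ^ n *
        ∏ s : Fin c.length, f s / (c.sizeUpTo (s + 1) : ℝ) := rfl
    rw [h0, h1, show ((-2:ℝ))^c.length = (-1:ℝ)^c.length * 2^c.length from by
      rw [← neg_one_mul, mul_pow]]
    ring
  have h2 : (0:ℝ) < Real.sqrt 2 ^ n := by positivity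
  have hfilter : (Finset.univ.filter fun a => F a < 0)
      = (Finset.univ.filter (fun s : Fin c.length =>
        c.blocksFun s % 8 = 3 ∨ c.blocksFun s % 8 = 5 ∨ c.blocksFun s % 8 = 0)) := by
    apply Finset.filter_congr
    intro s _
    constructor
    · intro h
      by_contra hs
      exact absurd h (not_lt.mpr (hNP s hs).le)
    · exact hP s
  rw [hprod, mul_pos_iff_of_pos_left, prod_sign _ _ hne, hfilter]
  exact h2
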